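/- Assume v ≠ 0 and fix s ∈ {0,1,...,K}. For any two reals w, w' both lying in the half-open interval [S_λ̄(|U_(s+1)|), S_λ̄(|U_(s)|)), one has f(w) − f(w') = ((1+sM²)/(2M²)) · ( (w − w_s)² − (w' − w_s)² ); that is, on this interval f is a quadratic in w with vertex at w_s = M(‖v‖₂ − a_s)/(1+sM²). -/

import Mathlib

/-- Soft-thresholding operator `S_t(x) = sign(x) · max(|x| − t, 0)`. -/
noncomputable def st (t x : ℝ) : ℝ := Real.sign x * max (|x| - t) 0

/-- Euclidean (ℓ₂) norm on `ℝ^n`. -/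
noncomputable def l2 {n : ℕ} (x : Fin n → ℝ) : ℝ := Real.sqrt (∑ i, (x i) ^ 2)

/-- ℓ₁ norm on `ℝ^n`. -/
noncomputable def l1 {n : ℕ} (x : Fin n → ℝ) : ℝ := ∑ i, |x i|

/-- `du U σ s = |U_(s)|`, the `s`-th largest absolute entry of `U` (1-based, via a sorting
permutation `σ`), with the out-of-range convention `|U_(s)| = 0` for `s > K`
(so that `S_λ̄(|U_(K+1)|) = 0`). -/
noncomputable def du {K : ℕ} (U : Fin K → ℝ) (σ : Equiv.Perm (Fin K)) (s : ℕ) : ℝ :=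
  if h : s - 1 < K then |U (σ ⟨s - 1, h⟩)| else 0

/-- `a_s = λ − M·Σ_{i=1}^s (|U_(i)| − λ̄)`. -/
noncomputable def aseq {K : ℕ} (U : Fin K → ℝ) (σ : Equiv.Perm (Fin K))
    (lam lamb M : ℝ) (s : ℕ) : ℝ :=
  lam - M * ∑ i ∈ Finset.Icc 1 s, (du U σ i - lamb)

/-- `w_s = M(‖v‖₂ − a_s)/(1+sM²)`. -/
noncomputable def wseq {k K : ℕ} (U : Fin K → ℝ) (σ : Equiv.Perm (Fin K))
    (lam lamb M : ℝ) (v : Fin k → ℝ) (s : ℕ) : ℝ :=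
  M * (l2 v - aseq U σ lam lamb M s) / (1 + (s : ℝ) * M ^ 2)

/-- `W(b)_j = sign(U_j)·min{M‖b‖₂, S_λ̄(|U_j|)}`. -/
noncomputable def Wmap {k K : ℕ} (lamb M : ℝ) (U : Fin K → ℝ) (b : Fin k → ℝ) :
    Fin K → ℝ :=
  fun j => Real.sign (U j) * min (M * l2 b) (st lamb (abs (U j)))

/-- `F(b) = ½‖v − b‖₂² + ½‖U − W(b)‖₂² + λ‖b‖₂ + λ̄‖W(b)‖₁`. -/
noncomputable def Ffun {k K : ℕ} (lam lamb M : ℝ) (v : Fin k → ℝ) (U : Fin K → ℝ)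
    (b : Fin k → ℝ) : ℝ :=
  (1 / 2) * ∑ i, (v i - b i) ^ 2
    + (1 / 2) * ∑ j, (U j - Wmap lamb M U b j) ^ 2
    + lam * l2 b + lamb * l1 (Wmap lamb M U b)

/-- `f(w) = min{ F(b) : b ∈ ℝ^k, M‖b‖₂ = w }` (as an infimum). -/
noncomputable def fmin {k K : ℕ} (lam lamb M : ℝ) (v : Fin k → ℝ) (U : Fin K → ℝ)
    (w : ℝ) : ℝ :=
  sInf (Ffun lam lamb M v U '' {b : Fin k → ℝ | M * l2 b = w})


/-!
For fixed `w = M‖b‖₂` the vector `W(b)` is determined by `w`, so the direction of `b` enters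
`F(b)` only through `-⟪v, b⟫`; by Cauchy–Schwarz `b` parallel to `v` is optimal, and
`f(w) = ½‖v‖² - ‖v‖ w/M + ½ (w/M)² + λ w/M + Σⱼ c(w, |Uⱼ|)` with
`c(w, u) = ½ (u - min{w, S_λ̄(u)})² + λ̄ min{w, S_λ̄(u)}`.
On the shell `[S_λ̄(|U_(s+1)|), S_λ̄(|U_(s)|))` the `s` largest coordinates have
`min{w, S_λ̄(|Uⱼ|)} = w` and the others do not depend on `w`, so `f` is a quadratic in `w` with
leading coefficient `(1 + sM²)/(2M²)`; completing the square puts its vertex at `w_s`.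
-/

open Finset

section SoftThreshold

variable {t x y : ℝ}

lemma st_zero (t : ℝ) : st t 0 = 0 := by simp [st]

lemma st_of_pos (hx : 0 < x) : st t x = max (x - t) 0 := by
  rw [st, Real.sign_of_pos hx, abs_of_pos hx, one_mul]

lemma st_nonneg_of_nonneg (hx : 0 ≤ x) : 0 ≤ st t x := by
  rcases hx.eq_or_lt with rfl | hx
  · rw [st_zero]
  · rw [st_of_pos hx]; exact le_max_right _ _

lemma st_le_st (hx : 0 ≤ x) (hxy : x ≤ y) : st t x ≤ st t y := by
  rcases hx.eq_or_lt with rfl | hx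
  · rw [st_zero]; exact st_nonneg_of_nonneg hxy
  · rw [st_of_pos hx, st_of_pos (hx.trans_le hxy)]
    gcongr

end SoftThreshold

lemma sum_Icc_one_eq_sum_range {M : Type*} [AddCommMonoid M] (f : ℕ → M) (s : ℕ) :
    ∑ i ∈ Icc 1 s, f i = ∑ i ∈ range s, f (i + 1) := by
  induction s with
  | zero => simp
  | succ s ih => rw [sum_Icc_succ_top (by omega), sum_range_succ, ih]

section Norms

variable {n : ℕ}

lemma l2_sq (x : Fin n → ℝ) : l2 x ^ 2 = ∑ i, x i ^ 2 :=
  Real.sq_sqrt (by positivity)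

lemma l2_pos {x : Fin n → ℝ} (hx : x ≠ 0) : 0 < l2 x := by
  obtain ⟨i, hi⟩ := Function.ne_iff.1 hx
  exact Real.sqrt_pos.2 <|
    sum_pos' (fun _ _ => sq_nonneg _) ⟨i, mem_univ i, sq_pos_of_ne_zero hi⟩

lemma l2_smul {c : ℝ} (hc : 0 ≤ c) (x : Fin n → ℝ) : l2 (c • x) = c * l2 x := by
  simp only [l2, Pi.smul_apply, smul_eq_mul, mul_pow, ← mul_sum]
  rw [Real.sqrt_mul (sq_nonneg c), Real.sqrt_sq hc]

lemma sum_mul_le_l2_mul_l2 (x y : Fin n → ℝ) : ∑ i, x i * y i ≤ l2 x * l2 y :=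
  Real.sum_mul_le_sqrt_mul_sqrt _ _ _

end Norms

section Sorted

variable {K : ℕ} (U : Fin K → ℝ) (σ : Equiv.Perm (Fin K))

lemma du_nonneg (s : ℕ) : 0 ≤ du U σ s := by
  unfold du; split
  · exact abs_nonneg _
  · exact le_rfl

lemma du_succ (i : Fin K) : du U σ (i + 1) = |U (σ i)| := by
  simp [du]

lemma du_antitone (hsort : ∀ i j : Fin K, i ≤ j → |U (σ j)| ≤ |U (σ i)|) :
    Antitone (du U σ) := by
  intro i j hij
  by_cases hj : j - 1 < K
  · rw [du, du, dif_pos hj, dif_pos (by omega)]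
    exact hsort _ _ (Fin.mk_le_mk.2 (by omega))
  · rw [du, dif_neg hj]
    exact du_nonneg U σ i

lemma sum_comp_abs_eq_sum_du {M : Type*} [AddCommMonoid M] (g : ℝ → M) :
    ∑ j, g |U j| = ∑ i ∈ range K, g (du U σ (i + 1)) := by
  rw [← Equiv.sum_comp σ, ← Fin.sum_univ_eq_sum_range (fun i => g (du U σ (i + 1)))]
  simp only [du_succ]

end Sorted

/-- Contribution of one coordinate `u = |U_j|` to `F`, once `M‖b‖₂ = w`. -/
noncomputable def coordCost (lamb w u : ℝ) : ℝ :=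
  (1 / 2) * (u - min w (st lamb u)) ^ 2 + lamb * min w (st lamb u)

lemma coordCost_of_le_st {lamb w u : ℝ} (h : w ≤ st lamb u) :
    coordCost lamb w u = (1 / 2) * (u - w) ^ 2 + lamb * w := by
  rw [coordCost, min_eq_left h]

lemma coordCost_of_st_le {lamb w u : ℝ} (h : st lamb u ≤ w) :
    coordCost lamb w u = coordCost lamb (st lamb u) u := by
  rw [coordCost, coordCost, min_eq_right h, min_self]

section SignMulMin

variable {t w : ℝ} (x : ℝ)

lemma abs_sign_mul_min_st (hw : 0 ≤ w) :
    |Real.sign x * min w (st t |x|)| = min w (st t |x|) := by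
  have hm : 0 ≤ min w (st t |x|) := le_min hw (st_nonneg_of_nonneg (abs_nonneg x))
  rcases lt_trichotomy x 0 with hx | rfl | hx
  · rw [Real.sign_of_neg hx, neg_one_mul, abs_neg, abs_of_nonneg hm]
  · simp [st_zero, hw]
  · rw [Real.sign_of_pos hx, one_mul, abs_of_nonneg hm]

lemma sub_sign_mul_min_st_sq (hw : 0 ≤ w) :
    (x - Real.sign x * min w (st t |x|)) ^ 2 = (|x| - min w (st t |x|)) ^ 2 := by
  rcases lt_trichotomy x 0 with hx | rfl | hx
  · rw [Real.sign_of_neg hx, abs_of_neg hx]; ring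
  · simp [st_zero, min_eq_right hw]
  · rw [Real.sign_of_pos hx, abs_of_pos hx, one_mul]

end SignMulMin

section Objective

variable {k K : ℕ} {lam lamb M : ℝ} {v : Fin k → ℝ} (U : Fin K → ℝ)

lemma Ffun_eq (hM : 0 ≤ M) (b : Fin k → ℝ) :
    Ffun lam lamb M v U b = (1 / 2) * ∑ i, v i ^ 2 - ∑ i, v i * b i + (1 / 2) * l2 b ^ 2
      + lam * l2 b + ∑ j, coordCost lamb (M * l2 b) |U j| := by
  have hw : 0 ≤ M * l2 b := mul_nonneg hM (Real.sqrt_nonneg _)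
  have expand_sq : ∑ i, (v i - b i) ^ 2 = ∑ i, v i ^ 2 - 2 * ∑ i, v i * b i + l2 b ^ 2 := by
    simp only [l2_sq, sub_sq, sum_add_distrib, sum_sub_distrib, mul_sum, mul_assoc]
  simp only [Ffun, l1, Wmap, coordCost, sub_sign_mul_min_st_sq _ hw, abs_sign_mul_min_st _ hw,
    expand_sq, sum_add_distrib, ← mul_sum]
  ring

lemma fmin_eq (hM : 0 < M) (hv : v ≠ 0) {w : ℝ} (hw : 0 ≤ w) :
    fmin lam lamb M v U w = (1 / 2) * ∑ i, v i ^ 2 - l2 v * (w / M) + (1 / 2) * (w / M) ^ 2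
      + lam * (w / M) + ∑ j, coordCost lamb w |U j| := by
  have hv_pos := l2_pos hv
  refine IsLeast.csInf_eq ⟨⟨(w / (M * l2 v)) • v, ?_, ?_⟩, ?_⟩
  · show M * l2 _ = w
    rw [l2_smul (by positivity)]
    field_simp
  · have hb : l2 ((w / (M * l2 v)) • v) = w / M := by
      rw [l2_smul (by positivity)]
      field_simp
    have hvb : ∑ i, v i * ((w / (M * l2 v)) • v) i = l2 v * (w / M) := by
      simp only [Pi.smul_apply, smul_eq_mul, mul_left_comm (v _), ← mul_sum, ← sq, ← l2_sq]
      field_simp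
    rw [Ffun_eq U hM.le, hb, hvb, mul_div_cancel₀ _ hM.ne']
  · rintro _ ⟨b, hb, rfl⟩
    have hb : l2 b = w / M := by rw [← (hb : M * l2 b = w), mul_div_cancel_left₀ _ hM.ne']
    have hcs := hb ▸ sum_mul_le_l2_mul_l2 v b
    rw [Ffun_eq U hM.le, hb, mul_div_cancel₀ _ hM.ne']
    linarith

end Objective

lemma sum_half_sub_sq_add_const {ι : Type*} (t : Finset ι) (a : ι → ℝ) (w c : ℝ) :
    ∑ i ∈ t, ((1 / 2) * (a i - w) ^ 2 + c)
      = (1 / 2) * ∑ i ∈ t, a i ^ 2 - w * ∑ i ∈ t, a i + #t * ((1 / 2) * w ^ 2 + c) := by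
  have expand (i : ι) : (1 / 2) * (a i - w) ^ 2 + c = (1 / 2) * a i ^ 2 - w * a i
      + ((1 / 2) * w ^ 2 + c) := by ring
  rw [sum_congr rfl fun i _ => expand i, sum_add_distrib, sum_sub_distrib, ← mul_sum, ← mul_sum,
    sum_const, nsmul_eq_mul]

section Shell

variable {K : ℕ} {U : Fin K → ℝ} {σ : Equiv.Perm (Fin K)} {lamb : ℝ} {s : ℕ} {w : ℝ}

lemma sum_coordCost_eq_of_mem_shell
    (hsort : ∀ i j : Fin K, i ≤ j → |U (σ j)| ≤ |U (σ i)|) (hs : s ≤ K)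
    (hw : st lamb (du U σ (s + 1)) ≤ w ∧ (0 < s → w < st lamb (du U σ s))) :
    ∑ j, coordCost lamb w |U j|
      = ∑ i ∈ range s, ((1 / 2) * (du U σ (i + 1) - w) ^ 2 + lamb * w)
        + ∑ i ∈ Ico s K, coordCost lamb (st lamb (du U σ (i + 1))) (du U σ (i + 1)) := by
  rw [sum_comp_abs_eq_sum_du U σ, ← sum_range_add_sum_Ico _ hs]
  congr 1
  · refine sum_congr rfl fun i hi => coordCost_of_le_st ?_
    have hi := mem_range.1 hi
    exact (hw.2 (by omega)).le.trans
      (st_le_st (du_nonneg U σ s) (du_antitone U σ hsort (by omega)))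
  · refine sum_congr rfl fun i hi => coordCost_of_st_le ?_
    have hi := (mem_Ico.1 hi).1
    exact (st_le_st (du_nonneg U σ _) (du_antitone U σ hsort (by omega))).trans hw.1

end Shell

lemma fmin_eq_on_shell {k K : ℕ} (lam lamb : ℝ) {M : ℝ} (hM : 0 < M)
    {v : Fin k → ℝ} (hv : v ≠ 0) {U : Fin K → ℝ} {σ : Equiv.Perm (Fin K)}
    (hsort : ∀ i j : Fin K, i ≤ j → |U (σ j)| ≤ |U (σ i)|) {s : ℕ} (hs : s ≤ K) :
    ∃ C, ∀ w, st lamb (du U σ (s + 1)) ≤ w ∧ (0 < s → w < st lamb (du U σ s)) →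
      fmin lam lamb M v U w
        = ((1 + (s : ℝ) * M ^ 2) / (2 * M ^ 2)) * (w - wseq U σ lam lamb M v s) ^ 2 + C := by
  have haseq :
      aseq U σ lam lamb M s = lam - M * (∑ i ∈ range s, du U σ (i + 1) - s * lamb) := by
    rw [aseq, sum_Icc_one_eq_sum_range (fun i => du U σ i - lamb), sum_sub_distrib, sum_const,
      card_range, nsmul_eq_mul]
  refine ⟨(1 / 2) * ∑ i, v i ^ 2 + (1 / 2) * ∑ i ∈ range s, du U σ (i + 1) ^ 2
    + ∑ i ∈ Ico s K, coordCost lamb (st lamb (du U σ (i + 1))) (du U σ (i + 1))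
    - ((1 + (s : ℝ) * M ^ 2) / (2 * M ^ 2)) * wseq U σ lam lamb M v s ^ 2, fun w hw => ?_⟩
  have hw0 : 0 ≤ w := (st_nonneg_of_nonneg (du_nonneg U σ _)).trans hw.1
  rw [fmin_eq U hM hv hw0, sum_coordCost_eq_of_mem_shell hsort hs hw, sum_half_sub_sq_add_const,
    card_range, wseq, haseq]
  field_simp
  ring

theorem stmt12_general (k K : ℕ)
    (lam lamb M : ℝ) (hM : 0 < M)
    (v : Fin k → ℝ) (hv : v ≠ 0) (U : Fin K → ℝ)
    (σ : Equiv.Perm (Fin K))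
    (hsort : ∀ i j : Fin K, i ≤ j → |U (σ j)| ≤ |U (σ i)|)
    (s : ℕ) (hs : s ≤ K) :
    ∀ w w' : ℝ,
      (st lamb (du U σ (s + 1)) ≤ w ∧ (0 < s → w < st lamb (du U σ s))) →
      (st lamb (du U σ (s + 1)) ≤ w' ∧ (0 < s → w' < st lamb (du U σ s))) →
      fmin lam lamb M v U w - fmin lam lamb M v U w'
        = ((1 + (s : ℝ) * M ^ 2) / (2 * M ^ 2)) *
            ((w - wseq U σ lam lamb M v s) ^ 2 - (w' - wseq U σ lam lamb M v s) ^ 2) := by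
  obtain ⟨C, hC⟩ := fmin_eq_on_shell lam lamb hM hv hsort hs
  intro w w' hw hw'
  rw [hC w hw, hC w' hw']
  ring

/-- Assume `v ≠ 0` and fix `s ∈ {0,…,K}`. For any `w, w'` in the half-open shell interval
`[S_λ̄(|U_(s+1)|), S_λ̄(|U_(s)|))` (upper bound `+∞` when `s = 0`),
`f(w) − f(w') = ((1+sM²)/(2M²))·((w − w_s)² − (w' − w_s)²)`. -/
theorem stmt12 (k K : ℕ) (hk : 1 ≤ k) (hK : 1 ≤ K)
    (lam lamb M : ℝ) (hlam : 0 ≤ lam) (hlamb : 0 ≤ lamb) (hM : 0 < M)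
    (v : Fin k → ℝ) (hv : v ≠ 0) (U : Fin K → ℝ)
    (σ : Equiv.Perm (Fin K))
    (hsort : ∀ i j : Fin K, i ≤ j → |U (σ j)| ≤ |U (σ i)|)
    (s : ℕ) (hs : s ≤ K) :
    ∀ w w' : ℝ,
      (st lamb (du U σ (s + 1)) ≤ w ∧ (0 < s → w < st lamb (du U σ s))) →
      (st lamb (du U σ (s + 1)) ≤ w' ∧ (0 < s → w' < st lamb (du U σ s))) →
      fmin lam lamb M v U w - fmin lam lamb M v U w'
        = ((1 + (s : ℝ) * M ^ 2) / (2 * M ^ 2)) *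
            ((w - wseq U σ lam lamb M v s) ^ 2 - (w' - wseq U σ lam lamb M v s) ^ 2) :=
  stmt12_general k K lam lamb M hM v hv U σ hsort s hs
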